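/- Let (X, γ) be a generalized Minkowski space. The following are equivalent: (a) γ is a norm, i.e., γ(−x) = γ(x) for all x ∈ X; (b) for any two distinct points x, y ∈ X, ft({x,y}) has more than one element; (c) for any two distinct points x, y ∈ X, ft({x,y}) is infinite; (d) for any two distinct x, y, ft({x,y}) \ {x} ≠ ∅; (e) for any two distinct x, y, ft({x,y}) \ {x,y} ≠ ∅; (f) for any two distinct x, y, x ∈ ft({x,y}); (g) for any two distinct x, y, {x,y} ⊆ ft({x,y}); (h) for any two distinct x, y, [x,y] ⊆ ft({x,y}); (i) for any two distinct x, y, the relative interior of [x,y] meets ft({x,y}); (j) for any two distinct x, y, [x,y]_γ ⊆ ft({x,y}); (k) for any two distinct x, y, the relative interior of [x,y]_γ meets ft({x,y}); (l) for any two distinct x, y, [x,y]_γ = ft({x,y}). -/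

import Mathlib

/-- A gauge on a real vector space: nonnegative, definite at `0`, positively homogeneous,
and subadditive. -/
def IsGauge {X : Type*} [AddCommGroup X] [Module ℝ X] (γ : X → ℝ) : Prop :=
  (∀ x, 0 ≤ γ x) ∧ (∀ x : X, γ x = 0 → x = 0) ∧
    (∀ (l : ℝ) (x : X), 0 ≤ l → γ (l • x) = l * γ x) ∧
    ∀ x y, γ (x + y) ≤ γ x + γ y

/-- The Fermat–Torricelli locus of the two points `x, y`: the set of minimizers of
`z ↦ γ(x - z) + γ(y - z)`. -/
def ftTwo {X : Type*} [AddCommGroup X] [Module ℝ X] (γ : X → ℝ) (x y : X) : Set X :=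
  {z : X | ∀ w : X, γ (x - z) + γ (y - z) ≤ γ (x - w) + γ (y - w)}

/-- The `γ`-segment `[x,y]_γ = {z : γ(x-z) + γ(z-y) = γ(x-y)}`. -/
def gammaSeg {X : Type*} [AddCommGroup X] [Module ℝ X] (γ : X → ℝ) (x y : X) : Set X :=
  {z : X | γ (x - z) + γ (z - y) = γ (x - y)}

/-!
If `γ` is symmetric, the triangle inequality shows that the Fermat–Torricelli locus of `{x, y}`
is exactly the `γ`-segment `[x, y]_γ`, a convex set containing `[x, y]`; this yields all the
other conditions. Each of them in turn forces either `x ∈ ft({x, y})` for all `x ≠ y`, which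
for `x = 0` gives `γ y ≤ γ (-y)`, or a point of `ft({x, y})` other than `x`. In the latter case
take `u` maximizing `γ w / γ (-w)` (on the unit sphere, by compactness); if the maximum exceeded
`1`, the triangle inequality `γ u ≤ γ (u - z) + γ z` would force `ft({u, 0}) = {u}`. So the
maximum is at most `1`, i.e. `γ w ≤ γ (-w)` for all `w`.
-/

lemma neg_eq_of_forall_le_neg {α β : Type*} [InvolutiveNeg α] [PartialOrder β] {f : α → β}
    (h : ∀ a, f a ≤ f (-a)) (a : α) : f (-a) = f a :=
  le_antisymm (by simpa using h (-a)) (h a)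

namespace IsGauge

variable {X : Type*} [AddCommGroup X] [Module ℝ X] {γ : X → ℝ}

lemma nonneg (hγ : IsGauge γ) (x : X) : 0 ≤ γ x := hγ.1 x

lemma eq_zero (hγ : IsGauge γ) {x : X} (hx : γ x = 0) : x = 0 := hγ.2.1 x hx

lemma map_smul_of_nonneg (hγ : IsGauge γ) {l : ℝ} (hl : 0 ≤ l) (x : X) : γ (l • x) = l * γ x :=
  hγ.2.2.1 l x hl

lemma map_add_le (hγ : IsGauge γ) (x y : X) : γ (x + y) ≤ γ x + γ y := hγ.2.2.2 x y

lemma map_zero (hγ : IsGauge γ) : γ 0 = 0 := by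
  simpa using hγ.map_smul_of_nonneg le_rfl 0

lemma pos (hγ : IsGauge γ) {x : X} (hx : x ≠ 0) : 0 < γ x :=
  (hγ.nonneg x).lt_of_ne' fun h => hx (hγ.eq_zero h)

lemma map_sub_le (hγ : IsGauge γ) (x z y : X) : γ (x - y) ≤ γ (x - z) + γ (z - y) := by
  simpa using hγ.map_add_le (x - z) (z - y)

lemma convexOn (hγ : IsGauge γ) : ConvexOn ℝ Set.univ γ := by
  refine ⟨convex_univ, fun a _ b _ s t hs ht _ => ?_⟩
  calc γ (s • a + t • b) ≤ γ (s • a) + γ (t • b) := hγ.map_add_le _ _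
    _ = s • γ a + t • γ b := by rw [hγ.map_smul_of_nonneg hs, hγ.map_smul_of_nonneg ht]; rfl

lemma left_mem_gammaSeg (hγ : IsGauge γ) (x y : X) : x ∈ gammaSeg γ x y := by
  simp [gammaSeg, hγ.map_zero]

lemma right_mem_gammaSeg (hγ : IsGauge γ) (x y : X) : y ∈ gammaSeg γ x y := by
  simp [gammaSeg, hγ.map_zero]

lemma segment_subset_gammaSeg (hγ : IsGauge γ) (x y : X) :
    segment ℝ x y ⊆ gammaSeg γ x y := by
  rintro _ ⟨a, b, ha, hb, hab, rfl⟩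
  obtain rfl : a = 1 - b := eq_sub_of_add_eq hab
  have hx : x - ((1 - b) • x + b • y) = b • (x - y) := by module
  have hy : (1 - b) • x + b • y - y = (1 - b) • (x - y) := by module
  show γ _ + γ _ = γ _
  rw [hx, hy, hγ.map_smul_of_nonneg hb, hγ.map_smul_of_nonneg ha]
  ring

lemma convex_gammaSeg (hγ : IsGauge γ) (x y : X) : Convex ℝ (gammaSeg γ x y) := by
  have hf : ConvexOn ℝ Set.univ (fun z => γ (x - z) + γ (z - y)) :=
    (hγ.convexOn.comp_affineMap (AffineMap.const ℝ X x - AffineMap.id ℝ X)).add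
      (hγ.convexOn.comp_affineMap (AffineMap.id ℝ X - AffineMap.const ℝ X y))
  convert hf.convex_le (γ (x - y)) using 1
  ext z
  simp [gammaSeg, le_antisymm_iff, hγ.map_sub_le x z y]

lemma add_smul_sub_notMem_gammaSeg (hγ : IsGauge γ) {x y : X} (hxy : x ≠ y) {t : ℝ}
    (ht : 0 < t) : x + t • (x - y) ∉ gammaSeg γ x y := by
  intro hw
  have hx : x - (x + t • (x - y)) = t • (y - x) := by module
  have hy : x + t • (x - y) - y = (1 + t) • (x - y) := by module
  have h := hw.out
  rw [hx, hy, hγ.map_smul_of_nonneg ht.le, hγ.map_smul_of_nonneg (by positivity)] at h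
  nlinarith [hγ.pos (sub_ne_zero.mpr hxy), hγ.nonneg (y - x)]

lemma add_smul_sub_notMem_gammaSeg' (hγ : IsGauge γ) {x y : X} (hxy : x ≠ y) {t : ℝ}
    (ht : 0 < t) : y + t • (y - x) ∉ gammaSeg γ x y := by
  intro hw
  have hx : x - (y + t • (y - x)) = (1 + t) • (x - y) := by module
  have hy : y + t • (y - x) - y = t • (y - x) := by module
  have h := hw.out
  rw [hx, hy, hγ.map_smul_of_nonneg (by positivity), hγ.map_smul_of_nonneg ht.le] at h
  nlinarith [hγ.pos (sub_ne_zero.mpr hxy), hγ.nonneg (y - x)]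

lemma gammaSeg_eq_ftTwo (hγ : IsGauge γ) (hsymm : ∀ x : X, γ (-x) = γ x) (x y : X) :
    gammaSeg γ x y = ftTwo γ x y := by
  have hswap : ∀ a b : X, γ (a - b) = γ (b - a) := fun a b => by rw [← neg_sub, hsymm]
  ext z
  refine ⟨fun hz w => ?_, fun hz => le_antisymm ?_ (hγ.map_sub_le x z y)⟩
  · rw [hswap y z, hswap y w, hz]
    exact hγ.map_sub_le x w y
  · simpa [hγ.map_zero, hswap y] using hz x

lemma neg_eq_of_forall_left_mem_ftTwo (hγ : IsGauge γ)
    (h : ∀ x y : X, x ≠ y → x ∈ ftTwo γ x y) : ∀ x : X, γ (-x) = γ x := by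
  refine neg_eq_of_forall_le_neg fun w => ?_
  rcases eq_or_ne w 0 with rfl | hw
  · simp
  · simpa [hγ.map_zero] using h 0 w hw.symm w

lemma ftTwo_subset_singleton (hγ : IsGauge γ) {u : X}
    (hmax : ∀ w, γ w * γ (-u) ≤ γ u * γ (-w)) (hlt : γ (-u) < γ u) : ftTwo γ u 0 ⊆ {u} := by
  intro z hz
  have hmin : γ (u - z) + γ (-z) ≤ γ (-u) := by simpa [hγ.map_zero] using hz u
  have htri : γ u ≤ γ (u - z) + γ z := by simpa using hγ.map_add_le (u - z) z
  have hkey : (γ u - γ (-u)) * γ (u - z) ≤ 0 := by nlinarith [hmax z, hγ.nonneg (-u)]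
  have hzero : γ (u - z) = 0 :=
    le_antisymm (nonpos_of_mul_nonpos_right hkey (sub_pos.mpr hlt)) (hγ.nonneg _)
  exact (sub_eq_zero.mp (hγ.eq_zero hzero)).symm

end IsGauge

lemma segment_infinite {𝕜 E : Type*} [Field 𝕜] [LinearOrder 𝕜] [IsStrictOrderedRing 𝕜]
    [AddCommGroup E] [Module 𝕜 E] {x y : E} (hxy : x ≠ y) : (segment 𝕜 x y).Infinite := by
  rw [segment_eq_image_lineMap]
  exact (Set.infinite_image_iff (AffineMap.lineMap_injective 𝕜 hxy).injOn).2
    (Set.Icc_infinite zero_lt_one)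

section IntrinsicInterior

variable {X : Type*} [AddCommGroup X] [Module ℝ X] [TopologicalSpace X] [ContinuousAdd X]
  [ContinuousSMul ℝ X] {s : Set X}

open Filter Topology in
lemma exists_pos_add_smul_sub_mem_of_mem_intrinsicInterior {z p : X}
    (hz : z ∈ intrinsicInterior ℝ s) (hp : p ∈ s) : ∃ t : ℝ, 0 < t ∧ z + t • (z - p) ∈ s := by
  obtain ⟨z, hz, rfl⟩ := hz
  have hline : ∀ t : ℝ, (z : X) + t • ((z : X) - p) ∈ affineSpan ℝ s := fun t => by
    simpa [vsub_eq_sub, vadd_eq_add, add_comm] using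
      AffineSubspace.smul_vsub_vadd_mem _ t z.2 (subset_affineSpan ℝ s hp) z.2
  let c : ℝ → affineSpan ℝ s := fun t => ⟨_, hline t⟩
  have hc : Continuous c := by fun_prop
  have hc0 : c 0 = z := by simp [c]
  have hev : ∀ᶠ t in 𝓝 (0 : ℝ), c t ∈ Subtype.val ⁻¹' s :=
    hc.continuousAt.preimage_mem_nhds (hc0 ▸ mem_interior_iff_mem_nhds.mp hz)
  obtain ⟨t, hts, ht⟩ := ((hev.filter_mono nhdsWithin_le_nhds).and
    (self_mem_nhdsWithin : ∀ᶠ t in 𝓝[>] (0 : ℝ), 0 < t)).exists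
  exact ⟨t, ht, hts⟩

lemma IsGauge.intrinsicInterior_subset_compl_pair {γ : X → ℝ} (hγ : IsGauge γ) {x y : X}
    (hxy : x ≠ y) (hs : s ⊆ gammaSeg γ x y) (hx : x ∈ s) (hy : y ∈ s) :
    intrinsicInterior ℝ s ⊆ {x, y}ᶜ := by
  rintro z hz (rfl | rfl : z = x ∨ z = y)
  · obtain ⟨t, ht, hts⟩ := exists_pos_add_smul_sub_mem_of_mem_intrinsicInterior hz hy
    exact hγ.add_smul_sub_notMem_gammaSeg hxy ht (hs hts)
  · obtain ⟨t, ht, hts⟩ := exists_pos_add_smul_sub_mem_of_mem_intrinsicInterior hz hx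
    exact hγ.add_smul_sub_notMem_gammaSeg' hxy ht (hs hts)

end IntrinsicInterior

section FiniteDimensional

variable {X : Type*} [NormedAddCommGroup X] [NormedSpace ℝ X] [FiniteDimensional ℝ X]
  {γ : X → ℝ}

lemma intrinsicInterior_inter_nonempty_of_subset {s t : Set X} (hs : Convex ℝ s)
    (hne : s.Nonempty) (hst : s ⊆ t) : (intrinsicInterior ℝ s ∩ t).Nonempty :=
  (hne.intrinsicInterior hs).mono fun _ hz => ⟨hz, hst (intrinsicInterior_subset hz)⟩

lemma IsGauge.continuous (hγ : IsGauge γ) : Continuous γ :=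
  continuousOn_univ.mp (hγ.convexOn.continuousOn isOpen_univ)

-- `u` maximizes `γ w / γ (-w)`, stated without division.
lemma IsGauge.exists_forall_mul_le_mul_neg [Nontrivial X] (hγ : IsGauge γ) :
    ∃ u ≠ 0, ∀ w, γ w * γ (-u) ≤ γ u * γ (-w) := by
  have hne : ∀ v ∈ Metric.sphere (0 : X) 1, v ≠ 0 := fun v hv h => by simp [h] at hv
  have hratio : ContinuousOn (fun w => γ w / γ (-w)) (Metric.sphere (0 : X) 1) :=
    hγ.continuous.continuousOn.div (hγ.continuous.comp continuous_neg).continuousOn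
      fun v hv => (hγ.pos (neg_ne_zero.mpr (hne v hv))).ne'
  obtain ⟨u, hu, hmax⟩ := (isCompact_sphere 0 1).exists_isMaxOn
    (NormedSpace.sphere_nonempty.mpr zero_le_one) hratio
  refine ⟨u, hne u hu, fun w => ?_⟩
  rcases eq_or_ne w 0 with rfl | hw
  · simp [hγ.map_zero]
  have hwn : 0 < ‖w‖ := norm_pos_iff.mpr hw
  set v := ‖w‖⁻¹ • w
  have hv : v ∈ Metric.sphere (0 : X) 1 := by
    simp [v, norm_smul, hwn.ne']
  have hvu : γ v * γ (-u) ≤ γ u * γ (-v) :=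
    (div_le_div_iff₀ (hγ.pos (neg_ne_zero.mpr (hne v hv)))
      (hγ.pos (neg_ne_zero.mpr (hne u hu)))).mp (hmax hv)
  have hwv : w = ‖w‖ • v := (smul_inv_smul₀ hwn.ne' w).symm
  rw [hwv, ← smul_neg, hγ.map_smul_of_nonneg hwn.le, hγ.map_smul_of_nonneg hwn.le, mul_assoc,
    mul_left_comm (γ u)]
  exact mul_le_mul_of_nonneg_left hvu hwn.le

lemma IsGauge.neg_eq_of_forall_ftTwo_diff_nonempty (hγ : IsGauge γ)
    (h : ∀ x y : X, x ≠ y → (ftTwo γ x y \ {x}).Nonempty) : ∀ x : X, γ (-x) = γ x := by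
  refine neg_eq_of_forall_le_neg fun w => ?_
  rcases subsingleton_or_nontrivial X with _ | _
  · rw [Subsingleton.elim (-w) w]
  obtain ⟨u, hu, hmax⟩ := hγ.exists_forall_mul_le_mul_neg
  have hle : γ u ≤ γ (-u) := by
    by_contra! hlt
    obtain ⟨z, hz, hzu⟩ := h u 0 hu
    exact hzu (hγ.ftTwo_subset_singleton hmax hlt hz)
  have hpos : 0 < γ (-u) := hγ.pos (neg_ne_zero.mpr hu)
  exact le_of_mul_le_mul_right (by nlinarith [hmax w, hγ.nonneg (-w)]) hpos

end FiniteDimensional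

/-- Characterizations of norms among gauges via the Fermat–Torricelli locus of two points. -/
theorem norm_tfae_fermatTorricelli_two_points
    {X : Type*} [NormedAddCommGroup X] [NormedSpace ℝ X] [FiniteDimensional ℝ X]
    (γ : X → ℝ) (hγ : IsGauge γ) :
    List.TFAE
      [ (∀ x : X, γ (-x) = γ x),
        (∀ x y : X, x ≠ y → (ftTwo γ x y).Nontrivial),
        (∀ x y : X, x ≠ y → (ftTwo γ x y).Infinite),
        (∀ x y : X, x ≠ y → (ftTwo γ x y \ {x}).Nonempty),
        (∀ x y : X, x ≠ y → (ftTwo γ x y \ {x, y}).Nonempty),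
        (∀ x y : X, x ≠ y → x ∈ ftTwo γ x y),
        (∀ x y : X, x ≠ y → {x, y} ⊆ ftTwo γ x y),
        (∀ x y : X, x ≠ y → segment ℝ x y ⊆ ftTwo γ x y),
        (∀ x y : X, x ≠ y → (intrinsicInterior ℝ (segment ℝ x y) ∩ ftTwo γ x y).Nonempty),
        (∀ x y : X, x ≠ y → gammaSeg γ x y ⊆ ftTwo γ x y),
        (∀ x y : X, x ≠ y → (intrinsicInterior ℝ (gammaSeg γ x y) ∩ ftTwo γ x y).Nonempty),
        (∀ x y : X, x ≠ y → gammaSeg γ x y = ftTwo γ x y) ] := by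
  tfae_have 1 → 12 := fun h x y _ => hγ.gammaSeg_eq_ftTwo h x y
  tfae_have 12 → 10 := fun h x y hxy => (h x y hxy).subset
  tfae_have 10 → 8 := fun h x y hxy => (hγ.segment_subset_gammaSeg x y).trans (h x y hxy)
  tfae_have 8 → 7 := fun h x y hxy =>
    Set.pair_subset (h x y hxy (left_mem_segment ℝ x y)) (h x y hxy (right_mem_segment ℝ x y))
  tfae_have 7 → 6 := fun h x y hxy => h x y hxy (Set.mem_insert x {y})
  tfae_have 6 → 1 := hγ.neg_eq_of_forall_left_mem_ftTwo
  tfae_have 8 → 3 := fun h x y hxy => (segment_infinite hxy).mono (h x y hxy)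
  tfae_have 3 → 2 := fun h x y hxy => (h x y hxy).nontrivial
  tfae_have 2 → 4 := fun h x y hxy => (h x y hxy).exists_ne x
  tfae_have 5 → 4 := fun h x y hxy => (h x y hxy).mono (Set.sdiff_subset_sdiff_right (by simp))
  tfae_have 4 → 1 := hγ.neg_eq_of_forall_ftTwo_diff_nonempty
  tfae_have 8 → 9 := fun h x y hxy => intrinsicInterior_inter_nonempty_of_subset
    (convex_segment x y) ⟨x, left_mem_segment ℝ x y⟩ (h x y hxy)
  tfae_have 9 → 5 := fun h x y hxy => (h x y hxy).mono fun z hz =>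
    ⟨hz.2, hγ.intrinsicInterior_subset_compl_pair hxy (hγ.segment_subset_gammaSeg x y)
      (left_mem_segment ℝ x y) (right_mem_segment ℝ x y) hz.1⟩
  tfae_have 10 → 11 := fun h x y hxy => intrinsicInterior_inter_nonempty_of_subset
    (hγ.convex_gammaSeg x y) ⟨x, hγ.left_mem_gammaSeg x y⟩ (h x y hxy)
  tfae_have 11 → 5 := fun h x y hxy => (h x y hxy).mono fun z hz =>
    ⟨hz.2, hγ.intrinsicInterior_subset_compl_pair hxy subset_rfl
      (hγ.left_mem_gammaSeg x y) (hγ.right_mem_gammaSeg x y) hz.1⟩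
  tfae_finish
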